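/- Let k ≥ 1 and let (c_n)_{n≥1} be a bounded sequence of complex numbers such that ‖(c_n)‖_{U^{k+1}[N]} → 0 as N → ∞. Then (c_n) is an oscillating sequence of order k: for every real polynomial P of degree at most k, (1/N) ∑_{n=1}^{N} c_n e^{2πiP(n)} → 0 as N → ∞. -/

import Mathlib

open Filter Finset

/-- The Gowers inner product of a family `(f ω)_{ω ∈ {0,1}^d}` of functions on a finite abelian
group `G`. -/
noncomputable def gowersInner (G : Type*) [AddCommGroup G] [Fintype G] (d : ℕ)
    (f : (Fin d → Bool) → G → ℂ) : ℂ :=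
  ((Fintype.card G : ℂ) ^ (d + 1))⁻¹ *
    ∑ x : G, ∑ h : Fin d → G, ∏ ω : Fin d → Bool,
      (starRingEnd ℂ)^[(Finset.univ.filter fun i : Fin d => ω i = true).card]
        (f ω (x + ∑ i : Fin d, if ω i = true then h i else 0))

/-- The Gowers uniformity norm `‖f‖_{U^d(G)}`, defined by
`‖f‖_{U^d(G)}^{2^d} = ⟨(f,…,f)⟩_{U^d(G)}` (a nonnegative real). -/
noncomputable def gowersNorm (G : Type*) [AddCommGroup G] [Fintype G] (d : ℕ)
    (f : G → ℂ) : ℝ :=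
  (gowersInner G d fun _ => f).re ^ ((1 : ℝ) / 2 ^ d)

/-- The Gowers norm of `c` over the interval `{1, …, N}`:
`‖c‖_{U^d[N]} = ‖c̃‖_{U^d(ℤ/2^d N ℤ)} / ‖𝟙_{[N]}‖_{U^d(ℤ/2^d N ℤ)}`, where `c̃` is `c` on
`{1,…,N}` extended by `0` to `ℤ/2^d N ℤ` and `𝟙_{[N]}` is the indicator of `{1,…,N}`. -/
noncomputable def gowersIntervalNorm (d N : ℕ) (c : ℕ → ℂ) : ℝ :=
  if hN : 0 < N then
    haveI : NeZero (2 ^ d * N) := ⟨by positivity⟩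
    gowersNorm (ZMod (2 ^ d * N)) d
        (fun x => if 1 ≤ x.val ∧ x.val ≤ N then c x.val else 0) /
      gowersNorm (ZMod (2 ^ d * N)) d
        (fun x => if 1 ≤ x.val ∧ x.val ≤ N then 1 else 0)
  else 0

/-!
The average of `c n e(P(n))` over `[1, N]` is `2^{k+1}` times the average over `ℤ/2^{k+1}Nℤ` of
its extension by zero, and an average is bounded by the `U^{k+1}` norm (iterated Cauchy–Schwarz:
`|⟨f⟩_{U^d}|^2 ≤ ⟨f⟩_{U^{d+1}}`). Because `2^{k+1}N ≥ 2N - 1`, a cube in `ℤ/2^{k+1}Nℤ` with all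
vertices in `[1, N]` lifts to a cube of integers, on which the alternating sum of a polynomial of
degree `≤ k` vanishes; so the phase `e(P)` drops out of the Gowers inner product. Finally
`‖𝟙_{[N]}‖_{U^{k+1}} ≤ 1`, so the `U^{k+1}` norm is at most the normalised interval norm.
-/

section Cube

variable {d : ℕ}

def cubeVertex {A : Type*} [AddCommMonoid A] (x : A) (h : Fin d → A) (ω : Fin d → Bool) : A :=
  x + ∑ i, if ω i = true then h i else 0

@[to_additive]
lemma prod_cube_succ {M : Type*} [CommMonoid M] (F : (Fin (d + 1) → Bool) → M) :
    ∏ ω, F ω = ∏ ω, F (Fin.cons false ω) * F (Fin.cons true ω) := by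
  rw [← (Fin.consEquiv fun _ => Bool).prod_comp, Fintype.prod_prod_type, Fintype.prod_bool,
    ← prod_mul_distrib]
  exact prod_congr rfl fun _ _ => mul_comm _ _

lemma card_filter_cons (b : Bool) (ω : Fin d → Bool) :
    #{i | (Fin.cons b ω : Fin (d + 1) → Bool) i = true} = b.toNat + #{i | ω i = true} := by
  simp only [card_filter, Fin.sum_univ_succ, Fin.cons_zero, Fin.cons_succ]
  cases b <;> rfl

lemma cubeVertex_cons {A : Type*} [AddCommMonoid A] (x y : A) (h : Fin d → A) (b : Bool)
    (ω : Fin d → Bool) :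
    cubeVertex x (Fin.cons y h : Fin (d + 1) → A) (Fin.cons b ω) =
      cubeVertex (x + if b = true then y else 0) h ω := by
  cases b <;> simp [cubeVertex, Fin.sum_univ_succ, add_assoc]

end Cube

lemma norm_iterate_conj (m : ℕ) (z : ℂ) : ‖(starRingEnd ℂ)^[m] z‖ = ‖z‖ := by
  induction m with
  | zero => rfl
  | succ m ih => rw [Function.iterate_succ_apply', Complex.norm_conj, ih]

section GowersInner

variable {G : Type*} [AddCommGroup G] {d : ℕ}

noncomputable def cubeProduct (f : G → ℂ) (x : G) (h : Fin d → G) : ℂ :=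
  ∏ ω : Fin d → Bool, (starRingEnd ℂ)^[#{i | ω i = true}] (f (cubeVertex x h ω))

lemma cubeProduct_cons (f : G → ℂ) (x y : G) (h : Fin d → G) :
    cubeProduct f x (Fin.cons y h : Fin (d + 1) → G) =
      cubeProduct f x h * starRingEnd ℂ (cubeProduct f (x + y) h) := by
  rw [cubeProduct, prod_cube_succ, prod_mul_distrib, cubeProduct, cubeProduct, map_prod]
  congr 1 <;> refine prod_congr rfl fun ω _ => ?_
  · simp [card_filter_cons, cubeVertex_cons]
  · rw [card_filter_cons, cubeVertex_cons, Function.iterate_add_apply]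
    simp

variable [Fintype G]

lemma gowersInner_eq_sum_cubeProduct (f : G → ℂ) :
    gowersInner G d (fun _ => f) =
      ((Fintype.card G : ℂ) ^ (d + 1))⁻¹ * ∑ x, ∑ h : Fin d → G, cubeProduct f x h :=
  rfl

lemma gowersInner_succ (f : G → ℂ) :
    gowersInner G (d + 1) (fun _ => f) =
      (((Fintype.card G : ℝ) ^ (d + 2))⁻¹ * ∑ h : Fin d → G, ‖∑ x, cubeProduct f x h‖ ^ 2 : ℝ) := by
  have hsum : ∀ x : G, ∑ h : Fin (d + 1) → G, cubeProduct f x h =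
      ∑ h : Fin d → G, cubeProduct f x h * starRingEnd ℂ (∑ z, cubeProduct f z h) := by
    intro x
    rw [← (Fin.consEquiv fun _ => G).sum_comp, Fintype.sum_prod_type, sum_comm]
    refine sum_congr rfl fun h _ => ?_
    simp only [Fin.consEquiv, Equiv.coe_fn_mk, cubeProduct_cons, ← mul_sum, map_sum]
    exact congrArg _ <| Fintype.sum_equiv (Equiv.addLeft x) _ _ fun _ => rfl
  rw [gowersInner_eq_sum_cubeProduct]
  simp only [hsum]
  rw [sum_comm]
  simp only [← sum_mul, Complex.mul_conj']
  push_cast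
  ring

lemma norm_gowersInner_succ_eq_re (f : G → ℂ) :
    ‖gowersInner G (d + 1) (fun _ => f)‖ = (gowersInner G (d + 1) (fun _ => f)).re := by
  rw [gowersInner_succ, Complex.norm_real, Complex.ofReal_re, Real.norm_of_nonneg (by positivity)]

lemma gowersNorm_succ (f : G → ℂ) :
    gowersNorm G (d + 1) f = ‖gowersInner G (d + 1) (fun _ => f)‖ ^ ((1 : ℝ) / 2 ^ (d + 1)) := by
  rw [gowersNorm, norm_gowersInner_succ_eq_re]

lemma sq_norm_gowersInner_le (f : G → ℂ) :
    ‖gowersInner G d (fun _ => f)‖ ^ 2 ≤ ‖gowersInner G (d + 1) (fun _ => f)‖ := by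
  set n : ℝ := (Fintype.card G : ℝ)
  have hn : 0 < n := by simp [n, Fintype.card_pos]
  set A : (Fin d → G) → ℂ := fun h => ∑ x, cubeProduct f x h
  have hcs : ‖∑ h, A h‖ ^ 2 ≤ n ^ d * ∑ h, ‖A h‖ ^ 2 := by
    calc ‖∑ h, A h‖ ^ 2 ≤ (∑ h, ‖A h‖) ^ 2 := by gcongr; exact norm_sum_le _ _
      _ ≤ #(univ : Finset (Fin d → G)) * ∑ h, ‖A h‖ ^ 2 := sq_sum_le_card_mul_sum_sq
      _ = n ^ d * ∑ h, ‖A h‖ ^ 2 := by simp [n]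
  have hd : ‖gowersInner G d (fun _ => f)‖ = (n ^ (d + 1))⁻¹ * ‖∑ h, A h‖ := by
    rw [gowersInner_eq_sum_cubeProduct, sum_comm, norm_mul, norm_inv, norm_pow,
      Complex.norm_natCast]
  rw [hd, gowersInner_succ, Complex.norm_real, Real.norm_of_nonneg (by positivity)]
  calc ((n ^ (d + 1))⁻¹ * ‖∑ h, A h‖) ^ 2 ≤ (n ^ (d + 1))⁻¹ ^ 2 * (n ^ d * ∑ h, ‖A h‖ ^ 2) := by
        rw [mul_pow]; gcongr
    _ = (n ^ (d + 2))⁻¹ * ∑ h, ‖A h‖ ^ 2 := by field_simp; ring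

lemma norm_gowersInner_zero_pow_le (f : G → ℂ) (d : ℕ) :
    ‖gowersInner G 0 (fun _ => f)‖ ^ 2 ^ d ≤ ‖gowersInner G d (fun _ => f)‖ := by
  induction d with
  | zero => simp
  | succ d ih =>
    calc ‖gowersInner G 0 (fun _ => f)‖ ^ 2 ^ (d + 1)
        = (‖gowersInner G 0 (fun _ => f)‖ ^ 2 ^ d) ^ 2 := by rw [pow_succ, pow_mul]
      _ ≤ ‖gowersInner G d (fun _ => f)‖ ^ 2 := by gcongr
      _ ≤ ‖gowersInner G (d + 1) (fun _ => f)‖ := sq_norm_gowersInner_le f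

lemma gowersInner_zero (f : G → ℂ) :
    gowersInner G 0 (fun _ => f) = (Fintype.card G : ℂ)⁻¹ * ∑ x, f x := by
  simp [gowersInner]

theorem norm_average_le_gowersNorm (f : G → ℂ) (d : ℕ) :
    ‖(Fintype.card G : ℂ)⁻¹ * ∑ x, f x‖ ≤ gowersNorm G (d + 1) f := by
  rw [← gowersInner_zero, gowersNorm_succ]
  have hexp : (1 : ℝ) / 2 ^ (d + 1) = ((2 ^ (d + 1) : ℕ) : ℝ)⁻¹ := by push_cast; rw [one_div]
  rw [hexp, ← Real.pow_rpow_inv_natCast (norm_nonneg (gowersInner G 0 fun _ => f))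
    (pow_ne_zero _ two_ne_zero)]
  gcongr
  exact norm_gowersInner_zero_pow_le f (d + 1)

lemma norm_gowersInner_le_one {f : G → ℂ} (hf : ∀ x, ‖f x‖ ≤ 1) :
    ‖gowersInner G d (fun _ => f)‖ ≤ 1 := by
  have hprod : ∀ x h, ‖cubeProduct f x (d := d) h‖ ≤ 1 := fun x h => by
    rw [cubeProduct, norm_prod]
    exact prod_le_one (fun _ _ => norm_nonneg _) fun ω _ => (norm_iterate_conj _ _).trans_le (hf _)
  rw [gowersInner_eq_sum_cubeProduct, norm_mul, norm_inv, norm_pow, Complex.norm_natCast,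
    inv_mul_le_one₀ (by positivity)]
  calc ‖∑ x, ∑ h : Fin d → G, cubeProduct f x h‖ ≤ ∑ x, ∑ h : Fin d → G, ‖cubeProduct f x h‖ :=
        (norm_sum_le _ _).trans (sum_le_sum fun x _ => norm_sum_le _ _)
    _ ≤ ∑ x : G, ∑ h : Fin d → G, 1 := by gcongr with x _ h _; exact hprod x h
    _ = (Fintype.card G : ℝ) ^ (d + 1) := by simp [pow_succ, mul_comm]

theorem gowersNorm_le_one {f : G → ℂ} (hf : ∀ x, ‖f x‖ ≤ 1) : gowersNorm G (d + 1) f ≤ 1 := by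
  rw [gowersNorm_succ]
  exact Real.rpow_le_one (norm_nonneg _) (norm_gowersInner_le_one hf) (by positivity)

end GowersInner

section Polynomial

open Polynomial

variable {R : Type*} [CommRing R]

lemma degree_sub_taylor_lt {P : R[X]} {n : ℕ} (hP : P.degree < ↑(n + 1)) (r : R) :
    (P - taylor r P).degree < n := by
  rcases eq_or_ne P 0 with rfl | hP0
  · simp
  calc (P - taylor r P).degree
      < P.degree := degree_sub_lt_left (degree_taylor P r).symm hP0 (leadingCoeff_taylor r P).symm
    _ ≤ n := Order.le_of_lt_succ (by exact_mod_cast hP)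

theorem sum_neg_one_pow_mul_eval_cubeVertex {d : ℕ} {P : R[X]} (hP : P.degree < d) (x : R)
    (t : Fin d → R) :
    ∑ ω : Fin d → Bool, (-1) ^ #{i | ω i = true} * P.eval (cubeVertex x t ω) = 0 := by
  induction d generalizing P with
  | zero => simp [degree_eq_bot.mp (Nat.WithBot.lt_zero_iff.mp hP)]
  | succ d ih =>
    induction t using Fin.consCases with
    | cons t₀ t =>
      rw [sum_cube_succ, ← ih (degree_sub_taylor_lt hP t₀) t]
      refine sum_congr rfl fun ω _ => ?_
      rw [card_filter_cons, card_filter_cons, cubeVertex_cons, cubeVertex_cons]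
      simp only [eval_sub, taylor_eval, Bool.toNat_false, Bool.toNat_true, Bool.false_eq_true,
        if_false, if_true, add_zero, pow_add, cubeVertex, add_right_comm x t₀]
      ring

end Polynomial

section Phase

open Complex Real

variable {G : Type*} [AddCommGroup G] {d : ℕ}

lemma iterate_conj_exp (m : ℕ) (r : ℝ) :
    (starRingEnd ℂ)^[m] (exp (2 * π * I * r)) = exp (2 * π * I * ((-1) ^ m * r : ℝ)) := by
  induction m with
  | zero => simp
  | succ m ih =>
    rw [Function.iterate_succ_apply', ih, ← exp_conj]
    congr 1
    simp only [map_mul, conj_ofReal, conj_I, map_ofNat]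
    push_cast
    ring

lemma cubeProduct_mul (f g : G → ℂ) (x : G) (h : Fin d → G) :
    cubeProduct (f * g) x h = cubeProduct f x h * cubeProduct g x h := by
  simp only [cubeProduct, ← RingHom.coe_pow, Pi.mul_apply, map_mul, prod_mul_distrib]

lemma cubeProduct_exp (φ : G → ℝ) (x : G) (h : Fin d → G) :
    cubeProduct (fun y => exp (2 * π * I * φ y)) x h =
      exp (2 * π * I *
        (∑ ω : Fin d → Bool, (-1) ^ #{i | ω i = true} * φ (cubeVertex x h ω) : ℝ)) := by
  simp only [cubeProduct, iterate_conj_exp, ← Complex.exp_sum, ofReal_sum, mul_sum]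

lemma cubeProduct_eq_zero {f : G → ℂ} {x : G} {h : Fin d → G} (ω : Fin d → Bool)
    (hω : f (cubeVertex x h ω) = 0) : cubeProduct f x h = 0 :=
  prod_eq_zero (mem_univ ω) (by rw [hω, ← RingHom.coe_pow, map_zero])

variable [Fintype G]

/-- `hφ` says that `φ` is a polynomial phase of degree `< d` on `S`. -/
theorem gowersInner_mul_exp {S : Set G} {f : G → ℂ} (hf : ∀ y ∉ S, f y = 0) (φ : G → ℝ)
    (hφ : ∀ x (h : Fin d → G), (∀ ω, cubeVertex x h ω ∈ S) →
      ∑ ω : Fin d → Bool, (-1) ^ #{i | ω i = true} * φ (cubeVertex x h ω) = 0) :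
    gowersInner G d (fun _ y => f y * exp (2 * π * I * φ y)) = gowersInner G d (fun _ => f) := by
  rw [gowersInner_eq_sum_cubeProduct, gowersInner_eq_sum_cubeProduct]
  congr 1
  refine sum_congr rfl fun x _ => sum_congr rfl fun h _ => ?_
  by_cases hS : ∀ ω, cubeVertex x h ω ∈ S
  · rw [show (fun y => f y * exp (2 * π * I * φ y)) = f * fun y => exp (2 * π * I * φ y) from rfl,
      cubeProduct_mul, cubeProduct_exp, hφ x h hS]
    simp
  · obtain ⟨ω, hω⟩ := not_forall.mp hS
    rw [cubeProduct_eq_zero ω (by rw [hf _ hω, zero_mul]), cubeProduct_eq_zero ω (hf _ hω)]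

end Phase

section Interval

variable {M N : ℕ} [NeZero M]

/-- The parallelogram defect of four representatives in `{1, …, N}` is a multiple of `M` of
absolute value at most `2N - 2 < M`. -/
lemma val_add_sum_eq_of_mem_Icc {ι : Type*} [DecidableEq ι] (hMN : 2 * N ≤ M + 1) (x : ZMod M)
    (h : ι → ZMod M) (H : ∀ s : Finset ι, (x + ∑ i ∈ s, h i).val ∈ Icc 1 N) (s : Finset ι) :
    ((x + ∑ i ∈ s, h i).val : ℤ) = x.val + ∑ i ∈ s, (((x + h i).val : ℤ) - x.val) := by
  induction s using Finset.induction_on with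
  | empty => simp
  | insert a s ha ih =>
    rw [sum_insert ha, sum_insert ha]
    have hs := mem_Icc.mp (H s)
    have ha' := mem_Icc.mp (by simpa using H {a})
    have h0 := mem_Icc.mp (by simpa using H ∅)
    have has := mem_Icc.mp (by simpa [sum_insert ha] using H (insert a s))
    have hmod : (M : ℤ) ∣ ((x + (h a + ∑ i ∈ s, h i)).val : ℤ) -
        (((x + ∑ i ∈ s, h i).val : ℤ) + (((x + h a).val : ℤ) - x.val)) := by
      rw [← ZMod.intCast_zmod_eq_zero_iff_dvd]
      push_cast
      simp only [ZMod.natCast_val, ZMod.cast_id', id]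
      ring
    have := Int.eq_zero_of_abs_lt_dvd hmod (by rw [abs_lt]; constructor <;> omega)
    linarith

theorem sum_ite_val_eq_sum_Icc (hNM : N < M) (g : ℕ → ℂ) :
    ∑ x : ZMod M, (if 1 ≤ x.val ∧ x.val ≤ N then g x.val else 0) = ∑ n ∈ Icc 1 N, g n := by
  rw [← sum_filter]
  refine sum_nbij' ZMod.val (fun n => (n : ZMod M)) (fun x hx => ?_) (fun n hn => ?_)
    (fun x _ => ZMod.natCast_zmod_val x) (fun n hn => ?_) (fun _ _ => rfl)
  · simpa using hx
  · have := mem_Icc.mp hn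
    simpa [ZMod.val_cast_of_lt (this.2.trans_lt hNM)] using this
  · exact ZMod.val_cast_of_lt ((mem_Icc.mp hn).2.trans_lt hNM)

open Polynomial in
theorem sum_neg_one_pow_mul_eval_val_cubeVertex {d : ℕ} (hMN : 2 * N ≤ M + 1) {P : ℝ[X]}
    (hP : P.degree < d) (x : ZMod M) (h : Fin d → ZMod M)
    (H : ∀ ω, 1 ≤ (cubeVertex x h ω).val ∧ (cubeVertex x h ω).val ≤ N) :
    ∑ ω : Fin d → Bool, (-1) ^ #{i | ω i = true} * P.eval ((cubeVertex x h ω).val : ℝ) = 0 := by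
  have H' : ∀ s : Finset (Fin d), (x + ∑ i ∈ s, h i).val ∈ Icc 1 N := fun s => by
    simpa [cubeVertex, sum_ite_mem] using H fun i => decide (i ∈ s)
  have hval : ∀ ω, ((cubeVertex x h ω).val : ℝ) =
      cubeVertex (x.val : ℝ) (fun i => ((x + h i).val : ℝ) - x.val) ω := fun ω => by
    have := val_add_sum_eq_of_mem_Icc hMN x h H' {i | ω i = true}
    rw [sum_filter, sum_filter] at this
    rw [cubeVertex, cubeVertex]
    exact_mod_cast this
  simp only [hval]
  exact sum_neg_one_pow_mul_eval_cubeVertex hP _ _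

end Interval

section Oscillation

open Complex Real Polynomial

theorem gowersInner_interval_mul_exp_eval {M N d : ℕ} [NeZero M] (hMN : 2 * N ≤ M + 1)
    (c : ℕ → ℂ) {P : ℝ[X]} (hP : P.degree < d) :
    gowersInner (ZMod M) d (fun _ x => if 1 ≤ x.val ∧ x.val ≤ N then
        c x.val * exp (2 * π * I * P.eval (x.val : ℝ)) else 0) =
      gowersInner (ZMod M) d (fun _ x => if 1 ≤ x.val ∧ x.val ≤ N then c x.val else 0) := by
  refine Eq.trans ?_ (gowersInner_mul_exp (S := {y : ZMod M | 1 ≤ y.val ∧ y.val ≤ N})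
    (f := fun y => if 1 ≤ y.val ∧ y.val ≤ N then c y.val else 0) (fun y hy => if_neg hy)
    (fun y => P.eval (y.val : ℝ)) (sum_neg_one_pow_mul_eval_val_cubeVertex hMN hP))
  simp_rw [ite_mul, zero_mul]

theorem gowersNorm_le_gowersIntervalNorm {d N : ℕ} [NeZero N] (c : ℕ → ℂ) :
    gowersNorm (ZMod (2 ^ (d + 1) * N)) (d + 1)
        (fun x => if 1 ≤ x.val ∧ x.val ≤ N then c x.val else 0) ≤
      gowersIntervalNorm (d + 1) N c := by
  have hNM : N < 2 ^ (d + 1) * N :=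
    lt_mul_left (NeZero.pos N) (Nat.one_lt_two_pow (Nat.succ_ne_zero d))
  have hindicator : 0 < gowersNorm (ZMod (2 ^ (d + 1) * N)) (d + 1)
      (fun x => if 1 ≤ x.val ∧ x.val ≤ N then 1 else 0) := by
    refine lt_of_lt_of_le ?_ (norm_average_le_gowersNorm _ d)
    have := sum_ite_val_eq_sum_Icc (M := 2 ^ (d + 1) * N) hNM fun _ => 1
    simp only [sum_const, Nat.card_Icc, add_tsub_cancel_right, nsmul_eq_mul, mul_one] at this
    rw [this, ZMod.card]
    have := NeZero.pos N
    simp only [Nat.cast_mul, Nat.cast_pow, Nat.cast_ofNat, norm_mul, norm_inv, norm_pow,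
      Complex.norm_natCast, Complex.norm_ofNat]
    positivity
  rw [gowersIntervalNorm, dif_pos (NeZero.pos N)]
  refine le_div_self (by rw [gowersNorm_succ]; positivity) hindicator
    (gowersNorm_le_one fun x => ?_)
  split_ifs <;> simp

theorem norm_average_mul_exp_eval_le_gowersIntervalNorm {d N : ℕ} [NeZero N] (c : ℕ → ℂ) {P : ℝ[X]}
    (hP : P.degree < ↑(d + 1)) :
    ‖(N : ℂ)⁻¹ * ∑ n ∈ Icc 1 N, c n * exp (2 * π * I * P.eval (n : ℝ))‖ ≤
      2 ^ (d + 1) * gowersIntervalNorm (d + 1) N c := by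
  set M := 2 ^ (d + 1) * N
  have hNM : N < M := lt_mul_left (NeZero.pos N) (Nat.one_lt_two_pow (Nat.succ_ne_zero d))
  have hMN : 2 * N ≤ M + 1 := by
    have : 2 * N ≤ 2 ^ (d + 1) * N :=
      Nat.mul_le_mul_right N (Nat.le_self_pow (Nat.succ_ne_zero d) 2)
    omega
  have havg : ‖(N : ℂ)⁻¹ * ∑ n ∈ Icc 1 N, c n * exp (2 * π * I * P.eval (n : ℝ))‖ =
      2 ^ (d + 1) * ‖(Fintype.card (ZMod M) : ℂ)⁻¹ * ∑ x : ZMod M,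
        if 1 ≤ x.val ∧ x.val ≤ N then c x.val * exp (2 * π * I * P.eval (x.val : ℝ)) else 0‖ := by
    rw [sum_ite_val_eq_sum_Icc hNM fun n => c n * exp (2 * π * I * P.eval (n : ℝ)), ZMod.card,
      norm_mul, norm_mul]
    simp only [M, norm_inv, Nat.cast_mul, Nat.cast_pow, Nat.cast_ofNat, norm_mul, norm_pow,
      Complex.norm_natCast, Complex.norm_ofNat]
    field_simp
  rw [havg]
  calc _ ≤ 2 ^ (d + 1) * gowersNorm (ZMod M) (d + 1) (fun x => if 1 ≤ x.val ∧ x.val ≤ N then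
          c x.val * exp (2 * π * I * P.eval (x.val : ℝ)) else 0) := by
        gcongr; exact norm_average_le_gowersNorm _ d
    _ = 2 ^ (d + 1) * gowersNorm (ZMod M) (d + 1)
          (fun x => if 1 ≤ x.val ∧ x.val ≤ N then c x.val else 0) := by
        rw [gowersNorm, gowersNorm, gowersInner_interval_mul_exp_eval hMN c hP]
    _ ≤ 2 ^ (d + 1) * gowersIntervalNorm (d + 1) N c := by
        gcongr; exact gowersNorm_le_gowersIntervalNorm c

end Oscillation

theorem oscillating_of_small_gowers_norm_general
    (k : ℕ) (c : ℕ → ℂ)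
    (hgowers : Tendsto (fun N : ℕ => gowersIntervalNorm (k + 1) N c) atTop (nhds 0)) :
    ∀ P : Polynomial ℝ, P.natDegree ≤ k →
      Tendsto (fun N : ℕ => (N : ℂ)⁻¹ *
          ∑ n ∈ Finset.Icc 1 N, c n * Complex.exp (2 * Real.pi * Complex.I * (P.eval (n : ℝ))))
        atTop (nhds 0) := by
  intro P hP
  have hdeg : P.degree < ↑(k + 1) :=
    (Polynomial.degree_le_of_natDegree_le hP).trans_lt (by exact_mod_cast k.lt_succ_self)
  refine squeeze_zero_norm' ?_ (by simpa using hgowers.const_mul ((2 : ℝ) ^ (k + 1)))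
  filter_upwards [eventually_ge_atTop 1] with N hN
  have : NeZero N := ⟨by omega⟩
  exact norm_average_mul_exp_eval_le_gowersIntervalNorm c hdeg

/-- A bounded sequence whose Gowers `U^{k+1}[N]` norms tend to `0` is oscillating of order `k`:
for every real polynomial `P` of degree at most `k`,
`(1/N) ∑_{n=1}^N c n e^{2πi P(n)} → 0`. -/
theorem oscillating_of_small_gowers_norm
    (k : ℕ) (hk : 1 ≤ k) (c : ℕ → ℂ) (B : ℝ) (hB : ∀ n, ‖c n‖ ≤ B)
    (hgowers : Tendsto (fun N : ℕ => gowersIntervalNorm (k + 1) N c) atTop (nhds 0)) :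
    ∀ P : Polynomial ℝ, P.natDegree ≤ k →
      Tendsto (fun N : ℕ => (N : ℂ)⁻¹ *
          ∑ n ∈ Finset.Icc 1 N, c n * Complex.exp (2 * Real.pi * Complex.I * (P.eval (n : ℝ))))
        atTop (nhds 0) :=
  oscillating_of_small_gowers_norm_general k c hgowers
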